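/- arXiv:1603.04629 — 2 statements merged into one kernel-verified Lean document; each statement's English description precedes it below -/
import Mathlib

section
/- Let r ≥ 1 and let A be a 2r × r complex matrix with det A_Λ ≠ 0. Then the map φ : ℂ^r → ℂ^{2r} defined by φ(z)_i = exp((Az)_i) is a topological embedding, and its image is a closed subset of the subspace {w ∈ ℂ^{2r} : w_i ≠ 0 for all i} (with the topology induced from ℂ^{2r}). -/
open Matrix Complex Topology

/-!
Since `log ‖exp (Az)ᵢ‖ = Re (Az)ᵢ`, the map `φ` is recovered from `z ↦ Re (Az)` up to the
continuous map `w ↦ log ‖w‖` on `(ℂ*)^{2r}`. In the real coordinates `(Re z₀, Im z₀, …)` of `ℂ^r`,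
`z ↦ Re (Az)` is multiplication by `A_Λ`, so it is injective and has a linear, hence continuous,
left inverse. Composing it with `w ↦ log ‖w‖` gives a continuous left inverse of `φ` on
`(ℂ*)^{2r}`, and a continuous map with a continuous left inverse into a Hausdorff space is a
closed embedding.
-/

/-- For a `2r × r` complex matrix `A = (aᵢʲ)`, `ALambda A` is the `2r × 2r` real matrix
whose `(i, 2j)` entry (0-indexed; `(i, 2j-1)` in 1-indexed notation) is `Re aᵢʲ` and whose
`(i, 2j+1)` entry is `-Im aᵢʲ`. -/
noncomputable def ALambda {r : ℕ} (A : Matrix (Fin (2 * r)) (Fin r) ℂ) :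
    Matrix (Fin (2 * r)) (Fin (2 * r)) ℝ := fun i k =>
  if k.val % 2 = 0 then (A i ⟨k.val / 2, by have := k.isLt; omega⟩).re
  else -(A i ⟨k.val / 2, by have := k.isLt; omega⟩).im

theorem isEmbedding_and_isClosed_range_of_leftInverse {X Y : Type*} [TopologicalSpace X]
    [TopologicalSpace Y] [T2Space Y] {s : Set Y} {f : X → Y} {g : s → X}
    (hf : Continuous f) (hg : Continuous g) (hfs : ∀ x, f x ∈ s)
    (hgf : ∀ x, g ⟨f x, hfs x⟩ = x) :
    IsEmbedding f ∧ IsClosed {y : s | (y : Y) ∈ Set.range f} := by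
  have hf' : IsClosedEmbedding (s.codRestrict f hfs) :=
    Function.LeftInverse.isClosedEmbedding hgf hg (hf.codRestrict hfs)
  refine ⟨IsEmbedding.subtypeVal.comp hf'.isEmbedding, ?_⟩
  convert hf'.isClosed_range using 1
  ext y
  exact ⟨fun ⟨x, hx⟩ => ⟨x, Subtype.ext hx⟩, fun ⟨x, hx⟩ => ⟨x, congrArg Subtype.val hx⟩⟩

def finInterleave (r : ℕ) : Fin r × Fin 2 ≃ Fin (2 * r) where
  toFun x := ⟨2 * x.1.val + x.2.val, by omega⟩
  invFun k := (⟨k.val / 2, by omega⟩, ⟨k.val % 2, by omega⟩)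
  left_inv := by rintro ⟨⟨j, hj⟩, ⟨b, hb⟩⟩; ext <;> simp <;> omega
  right_inv := by rintro ⟨k, hk⟩; ext; simp; omega

theorem ALambda_apply_finInterleave {r : ℕ} (A : Matrix (Fin (2 * r)) (Fin r) ℂ)
    (i : Fin (2 * r)) (j : Fin r) (b : Fin 2) :
    ALambda A i (finInterleave r (j, b)) = if b = 0 then (A i j).re else -(A i j).im := by
  fin_cases b <;> simp [ALambda, finInterleave, Nat.mul_add_div]

noncomputable def realCoords {r : ℕ} (z : Fin r → ℂ) : Fin (2 * r) → ℝ := fun k =>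
  let jb := (finInterleave r).symm k
  if jb.2 = 0 then (z jb.1).re else (z jb.1).im

theorem realCoords_finInterleave {r : ℕ} (z : Fin r → ℂ) (j : Fin r) (b : Fin 2) :
    realCoords z (finInterleave r (j, b)) = if b = 0 then (z j).re else (z j).im := by
  simp [realCoords]

theorem realCoords_injective (r : ℕ) : Function.Injective (realCoords (r := r)) := by
  intro z w h
  funext j
  have hre := congrFun h (finInterleave r (j, 0))
  have him := congrFun h (finInterleave r (j, 1))
  simp only [realCoords_finInterleave] at hre him
  exact Complex.ext (by simpa using hre) (by simpa using him)

theorem ALambda_mulVec_realCoords {r : ℕ} (A : Matrix (Fin (2 * r)) (Fin r) ℂ) (z : Fin r → ℂ) :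
    ALambda A *ᵥ realCoords z = fun i => ((A *ᵥ z) i).re := by
  funext i
  simp only [mulVec, dotProduct, re_sum, ← (finInterleave r).sum_comp, Fintype.sum_prod_type,
    Fin.sum_univ_two, ALambda_apply_finInterleave, realCoords_finInterleave]
  refine Finset.sum_congr rfl fun j _ => ?_
  simp only [mul_re, if_true, if_neg one_ne_zero]
  ring

noncomputable def reMulVecLin {m n : Type*} [Fintype n] (A : Matrix m n ℂ) :
    (n → ℂ) →ₗ[ℝ] m → ℝ :=
  (LinearMap.pi fun i => reLm ∘ₗ LinearMap.proj i) ∘ₗ A.mulVecLin.restrictScalars ℝ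

theorem reMulVecLin_apply {m n : Type*} [Fintype n] (A : Matrix m n ℂ) (z : n → ℂ) :
    reMulVecLin A z = fun i => ((A *ᵥ z) i).re :=
  rfl

theorem reMulVecLin_injective {r : ℕ} (A : Matrix (Fin (2 * r)) (Fin r) ℂ)
    (hdet : (ALambda A).det ≠ 0) : Function.Injective (reMulVecLin A) := by
  intro z w h
  have hunit : IsUnit (ALambda A) := (isUnit_iff_isUnit_det _).mpr (isUnit_iff_ne_zero.mpr hdet)
  refine realCoords_injective r (mulVec_injective_of_isUnit hunit ?_)
  simpa only [ALambda_mulVec_realCoords, reMulVecLin_apply] using h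

theorem stmt4_general (r : ℕ) (A : Matrix (Fin (2 * r)) (Fin r) ℂ)
    (hdet : (ALambda A).det ≠ 0) :
    IsEmbedding (fun (z : Fin r → ℂ) (i : Fin (2 * r)) => Complex.exp (A.mulVec z i)) ∧
    IsClosed {w : {w : Fin (2 * r) → ℂ // ∀ i, w i ≠ 0} |
      (w : Fin (2 * r) → ℂ) ∈
        Set.range (fun (z : Fin r → ℂ) (i : Fin (2 * r)) => Complex.exp (A.mulVec z i))} := by
  obtain ⟨g, hg⟩ := (reMulVecLin A).exists_leftInverse_of_injective
    (LinearMap.ker_eq_bot.mpr (reMulVecLin_injective A hdet))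
  refine isEmbedding_and_isClosed_range_of_leftInverse
    (s := {w : Fin (2 * r) → ℂ | ∀ i, w i ≠ 0}) (g := fun w => g fun i => Real.log ‖w.1 i‖)
    (by fun_prop) ?_ (fun z i => exp_ne_zero _) fun z => ?_
  · refine g.continuous_of_finiteDimensional.comp (continuous_pi fun i => ?_)
    exact ((continuous_apply i).comp continuous_subtype_val).norm.log
      fun w => norm_ne_zero_iff.mpr (w.2 i)
  · simp only [norm_exp, Real.log_exp]
    exact LinearMap.congr_fun hg z

theorem stmt4 (r : ℕ) (hr : 1 ≤ r) (A : Matrix (Fin (2 * r)) (Fin r) ℂ)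
    (hdet : (ALambda A).det ≠ 0) :
    IsEmbedding (fun (z : Fin r → ℂ) (i : Fin (2 * r)) => Complex.exp (A.mulVec z i)) ∧
    IsClosed {w : {w : Fin (2 * r) → ℂ // ∀ i, w i ≠ 0} |
      (w : Fin (2 * r) → ℂ) ∈
        Set.range (fun (z : Fin r → ℂ) (i : Fin (2 * r)) => Complex.exp (A.mulVec z i))} :=
  stmt4_general r A hdet
end

section
/- Let r ≥ 1 and let A be a 2r × r complex matrix with det A_Λ ≠ 0. Then for every w ∈ ℂ^{2r} with w_i ≠ 0 for all i, there exist a unique z ∈ ℂ^r and a unique u ∈ ℂ^{2r} with |u_i| = 1 for all i, such that w_i = exp((Az)_i) · u_i for all i = 1,…,2r. (This expresses the Cartan subgroup (ℂ^×)^{2r} as the product exp(𝔞) · (S^1)^{2r} with exp(𝔞) ∩ (S^1)^{2r} = {1}, which is the abelian case of the decomposition K_ℂ = K·L with K ∩ L = 1 of Proposition 2.1.) -/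
/-!
Writing `w = exp ζ · u` with `|u| = 1` forces `Re ζ = log |w|` and `u = w / exp ζ`, so the
decomposition exists and is unique as soon as `z ↦ Re (A z)` is a bijection `ℂ^r → ℝ^{2r}`.
In the real coordinates `(Re z₁, Im z₁, …)` of `ℂ^r` this real-linear map has matrix `A_Λ`,
which is invertible.
-/

open Matrix Complex

theorem norm_eq_one_and_eq_exp_mul_iff {w ζ u : ℂ} (hw : w ≠ 0) :
    (‖u‖ = 1 ∧ w = exp ζ * u) ↔ (ζ.re = Real.log ‖w‖ ∧ u = w / exp ζ) := by
  constructor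
  · rintro ⟨hu, rfl⟩
    rw [norm_mul, norm_exp, hu, mul_one, Real.log_exp, mul_div_cancel_left₀ _ (exp_ne_zero ζ)]
    exact ⟨rfl, rfl⟩
  · rintro ⟨hre, rfl⟩
    refine ⟨?_, (mul_div_cancel₀ w (exp_ne_zero ζ)).symm⟩
    rw [norm_div, norm_exp, hre, Real.exp_log (norm_pos_iff.2 hw), div_self (norm_ne_zero_iff.2 hw)]

theorem existsUnique_exp_mul_of_bijective_re {V ι : Type*} {f : V → ι → ℂ}
    (hf : Function.Bijective fun z i => (f z i).re) {w : ι → ℂ} (hw : ∀ i, w i ≠ 0) :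
    ∃! p : V × (ι → ℂ), (∀ i, ‖p.2 i‖ = 1) ∧ ∀ i, w i = exp (f p.1 i) * p.2 i := by
  obtain ⟨z, hz⟩ := hf.2 fun i => Real.log ‖w i‖
  have hp : ∀ p : V × (ι → ℂ), ((∀ i, ‖p.2 i‖ = 1) ∧ ∀ i, w i = exp (f p.1 i) * p.2 i) ↔
      p = (z, fun i => w i / exp (f z i)) := by
    rintro ⟨z', u⟩
    calc ((∀ i, ‖u i‖ = 1) ∧ ∀ i, w i = exp (f z' i) * u i)
        ↔ ∀ i, ‖u i‖ = 1 ∧ w i = exp (f z' i) * u i := forall_and.symm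
      _ ↔ ∀ i, (f z' i).re = Real.log ‖w i‖ ∧ u i = w i / exp (f z' i) :=
        forall_congr' fun i => norm_eq_one_and_eq_exp_mul_iff (hw i)
      _ ↔ (fun i => (f z' i).re) = (fun i => Real.log ‖w i‖) ∧
          u = fun i => w i / exp (f z' i) := by
        rw [forall_and, funext_iff, funext_iff]
      _ ↔ z' = z ∧ u = fun i => w i / exp (f z i) := by
        rw [← hz, hf.1.eq_iff]
        exact and_congr_right fun h => by rw [h]
      _ ↔ (z', u) = (z, fun i => w i / exp (f z i)) := Prod.mk_inj.symm
  exact ⟨_, (hp _).2 rfl, fun p h => (hp p).1 h⟩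

def finPairEquiv (r : ℕ) : Fin r × Fin 2 ≃ Fin (2 * r) :=
  finProdFinEquiv.trans (finCongr (Nat.mul_comm r 2))

@[simp]
theorem finPairEquiv_apply_val {r : ℕ} (j : Fin r) (b : Fin 2) :
    (finPairEquiv r (j, b) : ℕ) = 2 * j + b := by
  simp [finPairEquiv, finProdFinEquiv]; ring

-- `z ↦ (Re z₀, Im z₀, …, Re z_{r-1}, Im z_{r-1})`, the coordinates in which `ALambda A` is written.
def realifyEquiv (r : ℕ) : (Fin r → ℂ) ≃ (Fin (2 * r) → ℝ) :=
  (Equiv.piCongrRight fun _ => equivRealProd.trans (finTwoArrowEquiv ℝ).symm).trans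
    ((Equiv.curry _ _ _).symm.trans ((finPairEquiv r).arrowCongr (Equiv.refl ℝ)))

@[simp]
theorem realifyEquiv_apply_finPairEquiv_zero {r : ℕ} (z : Fin r → ℂ) (j : Fin r) :
    realifyEquiv r z (finPairEquiv r (j, 0)) = (z j).re := by
  simp [realifyEquiv]

@[simp]
theorem realifyEquiv_apply_finPairEquiv_one {r : ℕ} (z : Fin r → ℂ) (j : Fin r) :
    realifyEquiv r z (finPairEquiv r (j, 1)) = (z j).im := by
  simp [realifyEquiv]

@[simp]
theorem ALambda_apply_finPairEquiv_zero {r : ℕ} (A : Matrix (Fin (2 * r)) (Fin r) ℂ)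
    (i : Fin (2 * r)) (j : Fin r) : ALambda A i (finPairEquiv r (j, 0)) = (A i j).re := by
  simp [ALambda]

@[simp]
theorem ALambda_apply_finPairEquiv_one {r : ℕ} (A : Matrix (Fin (2 * r)) (Fin r) ℂ)
    (i : Fin (2 * r)) (j : Fin r) : ALambda A i (finPairEquiv r (j, 1)) = -(A i j).im := by
  simp [ALambda, show (2 * (j : ℕ) + 1) / 2 = j by omega]

theorem re_mulVec_eq_ALambda_mulVec {r : ℕ} (A : Matrix (Fin (2 * r)) (Fin r) ℂ)
    (z : Fin r → ℂ) (i : Fin (2 * r)) :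
    ((A *ᵥ z) i).re = (ALambda A *ᵥ realifyEquiv r z) i := by
  simp only [mulVec, dotProduct, re_sum, ← (finPairEquiv r).sum_comp, Fintype.sum_prod_type,
    Fin.sum_univ_two, ALambda_apply_finPairEquiv_zero, ALambda_apply_finPairEquiv_one,
    realifyEquiv_apply_finPairEquiv_zero, realifyEquiv_apply_finPairEquiv_one, mul_re]
  exact Finset.sum_congr rfl fun j _ => by ring

theorem bijective_re_mulVec_of_det_ALambda_ne_zero {r : ℕ} {A : Matrix (Fin (2 * r)) (Fin r) ℂ}
    (hdet : (ALambda A).det ≠ 0) : Function.Bijective fun z i => ((A *ᵥ z) i).re := by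
  have hA : IsUnit (ALambda A) := (isUnit_iff_isUnit_det _).2 hdet.isUnit
  have hmul : Function.Bijective (ALambda A).mulVec :=
    ⟨mulVec_injective_iff_isUnit.2 hA, mulVec_surjective_iff_isUnit.2 hA⟩
  convert hmul.comp (realifyEquiv r).bijective using 1
  ext z i
  exact re_mulVec_eq_ALambda_mulVec A z i

theorem stmt5_general (r : ℕ) (A : Matrix (Fin (2 * r)) (Fin r) ℂ)
    (hdet : (ALambda A).det ≠ 0) :
    ∀ w : Fin (2 * r) → ℂ, (∀ i, w i ≠ 0) →
      ∃! p : (Fin r → ℂ) × (Fin (2 * r) → ℂ),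
        (∀ i, ‖p.2 i‖ = 1) ∧
        ∀ i, w i = Complex.exp (A.mulVec p.1 i) * p.2 i :=
  fun _ hw =>
    existsUnique_exp_mul_of_bijective_re (bijective_re_mulVec_of_det_ALambda_ne_zero hdet) hw

theorem stmt5 (r : ℕ) (hr : 1 ≤ r) (A : Matrix (Fin (2 * r)) (Fin r) ℂ)
    (hdet : (ALambda A).det ≠ 0) :
    ∀ w : Fin (2 * r) → ℂ, (∀ i, w i ≠ 0) →
      ∃! p : (Fin r → ℂ) × (Fin (2 * r) → ℂ),
        (∀ i, ‖p.2 i‖ = 1) ∧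
        ∀ i, w i = Complex.exp (A.mulVec p.1 i) * p.2 i :=
  stmt5_general r A hdet
end
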